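/- Let f: L → M and g: L → N be S-linear maps of left S-semimodules with f a normal epimorphism (surjective and k-normal). If (g', f', P) is a pushout of (f, g), then f': N → P is a normal epimorphism; in fact P ≅ N/Ker(f'). -/

import Mathlib

universe u

/-- `f` is `k`-normal: `f l₁ = f l₂` implies `l₁ + k₁ = l₂ + k₂` for some
`k₁, k₂ ∈ Ker f`. -/
def KNormal {S L M : Type*} [Semiring S] [AddCommMonoid L] [AddCommMonoid M]
    [Module S L] [Module S M] (f : L →ₗ[S] M) : Prop :=
  ∀ l₁ l₂ : L, f l₁ = f l₂ → ∃ k₁ k₂ : L, f k₁ = 0 ∧ f k₂ = 0 ∧ l₁ + k₁ = l₂ + k₂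

/-- `(g' , f' , P)` is a pushout of `(f : L → M, g : L → N)`: the square
commutes and the universal property holds. -/
def IsPushout {S : Type u} [Semiring S] {L M N P : Type u}
    [AddCommMonoid L] [AddCommMonoid M] [AddCommMonoid N] [AddCommMonoid P]
    [Module S L] [Module S M] [Module S N] [Module S P]
    (f : L →ₗ[S] M) (g : L →ₗ[S] N) (g' : M →ₗ[S] P) (f' : N →ₗ[S] P) : Prop :=
  g'.comp f = f'.comp g ∧
    ∀ (Q : Type u) (_ : AddCommMonoid Q) (_ : Module S Q)
      (gs : M →ₗ[S] Q) (fs : N →ₗ[S] Q), gs.comp f = fs.comp g →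
      ∃! φ : P →ₗ[S] Q, φ.comp g' = gs ∧ φ.comp f' = fs

/-- The congruence on `N` induced by the kernel of `f'`:
`n ≈ n'` iff `n + k = n' + k'` for some `k, k' ∈ Ker f'`. -/
def kerSetoid {S N P : Type u} [Semiring S]
    [AddCommMonoid N] [AddCommMonoid P] [Module S N] [Module S P]
    (f' : N →ₗ[S] P) : Setoid N where
  r n n' := ∃ k, f' k = 0 ∧ ∃ k', f' k' = 0 ∧ n + k = n' + k'
  iseqv := by
    constructor
    · intro n; exact ⟨0, map_zero _, 0, map_zero _, rfl⟩
    · rintro a b ⟨k, hk, k', hk', h⟩; exact ⟨k', hk', k, hk, h.symm⟩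
    · rintro a b c ⟨k₁, h₁, k₁', h₁', e₁⟩ ⟨k₂, h₂, k₂', h₂', e₂⟩
      refine ⟨k₁ + k₂, by simp [h₁, h₂], k₂' + k₁', by simp [h₂', h₁'], ?_⟩
      calc a + (k₁ + k₂) = (a + k₁) + k₂ := by rw [add_assoc]
        _ = (b + k₁') + k₂ := by rw [e₁]
        _ = (b + k₂) + k₁' := by rw [add_right_comm]
        _ = (c + k₂') + k₁' := by rw [e₂]
        _ = c + (k₂' + k₁') := by rw [add_assoc]

/-!
Since `f` is onto, `g' m = g' (f l) = f' (g l)`, so `f'` and `g'` both land in `range f'`, and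
the uniqueness half of the universal property forces `range f' = P`. For `k`-normality, test the
pushout against `N/g(Ker f)`: the quotient map `N → N/g(Ker f)` together with the map
`M → N/g(Ker f)` obtained by descending along the normal epimorphism `f` factors through `P`,
so `f' n = f' n'` already identifies `n` and `n'` in `N/g(Ker f)`, and `g(Ker f) ⊆ Ker f'`.
Once `f'` is a normal epimorphism, `kerSetoid f'` is its kernel relation and `P ≅ N/Ker f'`.
-/

open Function

namespace Submodule

variable {S N : Type*} [Semiring S] [AddCommMonoid N] [Module S N] (K : Submodule S N)

/-- The Bourne congruence of `K`; its quotient is `N/K`. -/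
def bourneCon : ModuleCon S N where
  r n n' := ∃ k ∈ K, ∃ k' ∈ K, n + k = n' + k'
  iseqv := by
    refine ⟨fun n => ⟨0, K.zero_mem, 0, K.zero_mem, rfl⟩,
      fun ⟨k, hk, k', hk', e⟩ => ⟨k', hk', k, hk, e.symm⟩, ?_⟩
    rintro a b c ⟨k₁, hk₁, k₁', hk₁', e₁⟩ ⟨k₂, hk₂, k₂', hk₂', e₂⟩
    refine ⟨k₁ + k₂, K.add_mem hk₁ hk₂, k₂' + k₁', K.add_mem hk₂' hk₁', ?_⟩
    calc a + (k₁ + k₂) = (b + k₂) + k₁' := by rw [← add_assoc, e₁, add_right_comm]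
      _ = c + (k₂' + k₁') := by rw [e₂, add_assoc]
  add' := by
    rintro a a' b b' ⟨k₁, hk₁, k₁', hk₁', e₁⟩ ⟨k₂, hk₂, k₂', hk₂', e₂⟩
    refine ⟨k₁ + k₂, K.add_mem hk₁ hk₂, k₁' + k₂', K.add_mem hk₁' hk₂', ?_⟩
    rw [add_add_add_comm, e₁, e₂, add_add_add_comm]
  smul s := by
    rintro a b ⟨k, hk, k', hk', e⟩
    exact ⟨s • k, K.smul_mem s hk, s • k', K.smul_mem s hk', by rw [← smul_add, e, smul_add]⟩

def bourneMkQ : N →ₗ[S] K.bourneCon.Quotient :=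
  { AddCon.mk' K.bourneCon.toAddCon with map_smul' := fun _ _ => rfl }

variable {K}

theorem bourneMkQ_eq_iff {n n' : N} :
    K.bourneMkQ n = K.bourneMkQ n' ↔ ∃ k ∈ K, ∃ k' ∈ K, n + k = n' + k' :=
  K.bourneCon.toAddCon.eq

theorem bourneMkQ_eq_zero {k : N} (hk : k ∈ K) : K.bourneMkQ k = 0 :=
  bourneMkQ_eq_iff.2 ⟨0, K.zero_mem, k, hk, by rw [add_zero, zero_add]⟩

end Submodule

section KNormal

variable {S L M Q : Type*} [Semiring S] [AddCommMonoid L] [AddCommMonoid M] [AddCommMonoid Q]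
  [Module S L] [Module S M] [Module S Q] {f : L →ₗ[S] M}

theorem KNormal.exists_comp_eq (hfk : KNormal f) (hfs : Surjective f) (h : L →ₗ[S] Q)
    (hh : ∀ l, f l = 0 → h l = 0) : ∃ h' : M →ₗ[S] Q, h'.comp f = h := by
  have h_eq : ∀ l l', f l = f l' → h l = h l' := fun l l' hl => by
    obtain ⟨k, k', hk, hk', e⟩ := hfk l l' hl
    simpa only [map_add, hh k hk, hh k' hk', add_zero] using congrArg h e
  let s := surjInv hfs
  have hs : ∀ m, f (s m) = m := surjInv_eq hfs
  refine ⟨{ toFun := fun m => h (s m), map_add' := fun m m' => ?_, map_smul' := fun c m => ?_ },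
    LinearMap.ext fun l => h_eq _ _ (hs (f l))⟩
  · rw [← map_add]; exact h_eq _ _ (by rw [map_add, hs, hs, hs])
  · rw [RingHom.id_apply, ← map_smul]; exact h_eq _ _ (by rw [map_smul, hs, hs])

end KNormal

theorem kerSetoid_eq_ker {S N P : Type u} [Semiring S] [AddCommMonoid N] [AddCommMonoid P]
    [Module S N] [Module S P] {f : N →ₗ[S] P} (hf : KNormal f) :
    kerSetoid f = Setoid.ker f := by
  refine Setoid.ext fun n n' => ?_
  rw [Setoid.ker_def]
  refine ⟨?_, fun h => ?_⟩
  · rintro ⟨k, hk, k', hk', e⟩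
    simpa only [map_add, hk, hk', add_zero] using congrArg f e
  · obtain ⟨k, k', hk, hk', e⟩ := hf n n' h
    exact ⟨k, hk, k', hk', e⟩

theorem exists_equiv_quotient_kerSetoid {S N P : Type u} [Semiring S] [AddCommMonoid N]
    [AddCommMonoid P] [Module S N] [Module S P] {f : N →ₗ[S] P} (hs : Surjective f)
    (hk : KNormal f) :
    ∃ e : P ≃ Quotient (kerSetoid f), ∀ n, e (f n) = Quotient.mk (kerSetoid f) n := by
  rw [kerSetoid_eq_ker hk]
  exact ⟨(Setoid.quotientKerEquivOfSurjective f hs).symm, fun n => (Equiv.symm_apply_eq _).2 rfl⟩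

namespace IsPushout

variable {S : Type u} [Semiring S] {L M N P : Type u}
  [AddCommMonoid L] [AddCommMonoid M] [AddCommMonoid N] [AddCommMonoid P]
  [Module S L] [Module S M] [Module S N] [Module S P]
  {f : L →ₗ[S] M} {g : L →ₗ[S] N} {g' : M →ₗ[S] P} {f' : N →ₗ[S] P}

theorem hom_ext (hpo : IsPushout f g g' f') {Q : Type u} [AddCommMonoid Q] [Module S Q]
    {φ ψ : P →ₗ[S] Q} (hg' : φ.comp g' = ψ.comp g') (hf' : φ.comp f' = ψ.comp f') : φ = ψ :=
  (hpo.2 Q _ _ (ψ.comp g') (ψ.comp f') (by rw [LinearMap.comp_assoc, hpo.1,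
    LinearMap.comp_assoc])).unique ⟨hg', hf'⟩ ⟨rfl, rfl⟩

theorem surjective_right (hpo : IsPushout f g g' f') (hf : Surjective f) : Surjective f' := by
  have hg' : ∀ m, g' m ∈ LinearMap.range f' := fun m => by
    obtain ⟨l, rfl⟩ := hf m
    exact ⟨g l, (LinearMap.congr_fun hpo.1 l).symm⟩
  obtain ⟨φ, ⟨hφg', hφf'⟩, -⟩ := hpo.2 (LinearMap.range f') _ _ (g'.codRestrict _ hg')
    f'.rangeRestrict (LinearMap.ext fun l => Subtype.ext (LinearMap.congr_fun hpo.1 l))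
  have hφ : (LinearMap.range f').subtype.comp φ = LinearMap.id :=
    hpo.hom_ext (by rw [LinearMap.comp_assoc, hφg']; rfl) (by rw [LinearMap.comp_assoc, hφf']; rfl)
  intro p
  obtain ⟨n, hn⟩ := (φ p).2
  exact ⟨n, hn.trans (LinearMap.congr_fun hφ p)⟩

theorem kNormal_right (hpo : IsPushout f g g' f') (hfs : Surjective f) (hfk : KNormal f) :
    KNormal f' := by
  set K := (LinearMap.ker f).map g
  have hK : ∀ k ∈ K, f' k = 0 := by
    rintro _ ⟨l, hl, rfl⟩
    rw [← LinearMap.comp_apply, ← hpo.1, LinearMap.comp_apply, LinearMap.mem_ker.1 hl, map_zero]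
  obtain ⟨gs, hgs⟩ := hfk.exists_comp_eq hfs (K.bourneMkQ.comp g)
    fun l hl => Submodule.bourneMkQ_eq_zero ⟨l, hl, rfl⟩
  obtain ⟨φ, ⟨-, hφ⟩, -⟩ := hpo.2 _ _ _ gs K.bourneMkQ hgs
  intro n n' h
  have hq : K.bourneMkQ n = K.bourneMkQ n' := by
    rw [← hφ, LinearMap.comp_apply, LinearMap.comp_apply, h]
  obtain ⟨k, hk, k', hk', e⟩ := Submodule.bourneMkQ_eq_iff.1 hq
  exact ⟨k, k', hK k hk, hK k' hk', e⟩

end IsPushout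

/-- If `f` is a normal epimorphism, then the pushout map `f'` is a normal
epimorphism; in fact `P ≅ N / Ker f'`. -/
theorem pushout_normal_epi
    {S : Type u} [Semiring S] {L M N P : Type u}
    [AddCommMonoid L] [AddCommMonoid M] [AddCommMonoid N] [AddCommMonoid P]
    [Module S L] [Module S M] [Module S N] [Module S P]
    (f : L →ₗ[S] M) (g : L →ₗ[S] N) (g' : M →ₗ[S] P) (f' : N →ₗ[S] P)
    (hpo : IsPushout f g g' f')
    (hfs : Function.Surjective f) (hfk : KNormal f) :
    Function.Surjective f' ∧ KNormal f' ∧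
      ∃ e : P ≃ Quotient (kerSetoid f'),
        ∀ n : N, e (f' n) = Quotient.mk (kerSetoid f') n := by
  have hs := hpo.surjective_right hfs
  have hk := hpo.kNormal_right hfs hfk
  exact ⟨hs, hk, exists_equiv_quotient_kerSetoid hs hk⟩
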